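/- arXiv:2312.03169 — 2 statements merged into one kernel-verified Lean document; each statement's English description precedes it below -/
import Mathlib

section
/- Let $f: \mathbb{R}^n \to \mathbb{R}$, $x^0 \in \mathbb{R}^n$, and $D = [d_1 \cdots d_p] \in \mathbb{R}^{n \times p}$ with full column rank. Define $m(x) = f(x^0) + (2\nabla_S f(x^0;D) - \nabla_S f(x^0;2D))^\top (x - x^0) + \tfrac{1}{2}(x-x^0)^\top H (x-x^0)$ where $H = \nabla_S^2 f(x^0;D)$. Then for all $i, j \in \{1,\dots,p\}$, $m(x^0 + d_i + d_j) = f(x^0 + d_i + d_j)$. -/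
open Matrix

/-- The vector `δ_f(x⁰;D)` of function-value differences along the columns of `D`. -/
noncomputable def deltaf {n p : ℕ} (f : (Fin n → ℝ) → ℝ) (x0 : Fin n → ℝ)
    (D : Matrix (Fin n) (Fin p) ℝ) : Fin p → ℝ :=
  fun i => f (x0 + Dᵀ i) - f x0

/-- The generalized simplex gradient `∇_S f(x⁰;D) = (Dᵀ)† δ_f(x⁰;D)`, where for a
full-column-rank `D` the pseudoinverse gives `(Dᵀ)† = D (DᵀD)⁻¹`. -/
noncomputable def gsg {n p : ℕ} (f : (Fin n → ℝ) → ℝ) (x0 : Fin n → ℝ)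
    (D : Matrix (Fin n) (Fin p) ℝ) : Fin n → ℝ :=
  (D * (Dᵀ * D)⁻¹).mulVec (deltaf f x0 D)

/-- The matrix `δ_{∇_S f}(x⁰;D)` whose `i`-th row is `(∇_S f(x⁰+dᵢ;D) - ∇_S f(x⁰;D))ᵀ`. -/
noncomputable def deltaGsg {n p : ℕ} (f : (Fin n → ℝ) → ℝ) (x0 : Fin n → ℝ)
    (D : Matrix (Fin n) (Fin p) ℝ) : Matrix (Fin p) (Fin n) ℝ :=
  Matrix.of fun i j => gsg f (x0 + Dᵀ i) D j - gsg f x0 D j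

/-- The generalized simplex Hessian `∇²_S f(x⁰;D) = (Dᵀ)† δ_{∇_S f}(x⁰;D)`. -/
noncomputable def gsh {n p : ℕ} (f : (Fin n → ℝ) → ℝ) (x0 : Fin n → ℝ)
    (D : Matrix (Fin n) (Fin p) ℝ) : Matrix (Fin n) (Fin n) ℝ :=
  (D * (Dᵀ * D)⁻¹) * deltaGsg f x0 D

/-- The quadratic model
`m(x) = f(x⁰) + (2∇_S f(x⁰;D) - ∇_S f(x⁰;2D))ᵀ(x-x⁰) + ½(x-x⁰)ᵀ∇²_S f(x⁰;D)(x-x⁰)`. -/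
noncomputable def qmodel {n p : ℕ} (f : (Fin n → ℝ) → ℝ) (x0 : Fin n → ℝ)
    (D : Matrix (Fin n) (Fin p) ℝ) (x : Fin n → ℝ) : ℝ :=
  f x0 + dotProduct ((2 : ℝ) • gsg f x0 D - gsg f x0 ((2 : ℝ) • D)) (x - x0)
    + (1 / 2) * dotProduct (x - x0) ((gsh f x0 D).mulVec (x - x0))

lemma key_unit {n p : ℕ} (D : Matrix (Fin n) (Fin p) ℝ)
    (hrank : Function.Injective D.mulVec) : Dᵀ * (D * (Dᵀ * D)⁻¹) = 1 := by
  have hinj : Function.Injective (Dᵀ * D).mulVec := by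
    intro x y h
    apply hrank
    have h2 : (Dᵀ * D).mulVec (x - y) = 0 := by
      rw [mulVec_sub, h, sub_self]
    rw [← mulVec_mulVec] at h2
    replace h2 := congr_arg (dotProduct (x - y)) h2
    rw [dotProduct_mulVec, dotProduct_zero, vecMul_transpose,
      dotProduct_self_eq_zero] at h2
    rw [show x = y + (x - y) by abel, mulVec_add, h2, add_zero]
  have hu : IsUnit (Dᵀ * D).det :=
    ((Dᵀ * D).isUnit_iff_isUnit_det).mp (mulVec_injective_iff_isUnit.mp hinj)
  rw [← Matrix.mul_assoc, Matrix.mul_nonsing_inv _ hu]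

lemma dot_gsg {n p : ℕ} (f : (Fin n → ℝ) → ℝ) (y : Fin n → ℝ)
    (D : Matrix (Fin n) (Fin p) ℝ) (hrank : Function.Injective D.mulVec) (j : Fin p) :
    dotProduct (gsg f y D) (Dᵀ j) = deltaf f y D j := by
  have h : Dᵀ.mulVec (gsg f y D) = deltaf f y D := by
    rw [gsg, mulVec_mulVec, key_unit D hrank, one_mulVec]
  calc dotProduct (gsg f y D) (Dᵀ j) = (Dᵀ.mulVec (gsg f y D)) j := by
        rw [mulVec, dotProduct_comm]
    _ = deltaf f y D j := by rw [h]

lemma two_smul_inj {n p : ℕ} (D : Matrix (Fin n) (Fin p) ℝ)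
    (hrank : Function.Injective D.mulVec) :
    Function.Injective ((2:ℝ) • D).mulVec := by
  intro x y h
  apply hrank
  simp only [smul_mulVec] at h
  exact smul_right_injective _ (two_ne_zero) h

lemma quad_form {n p : ℕ} (D : Matrix (Fin n) (Fin p) ℝ)
    (M : Matrix (Fin n) (Fin n) ℝ) (i j : Fin p) :
    dotProduct (Dᵀ i) (M.mulVec (Dᵀ j)) = (Dᵀ * M * D) i j := by
  simp only [mul_apply, mulVec, dotProduct, transpose_apply, Finset.mul_sum, Finset.sum_mul]
  rw [Finset.sum_comm]
  apply Finset.sum_congr rfl; intro k _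
  apply Finset.sum_congr rfl; intro l _
  ring

/-- The model interpolates `f` at the points `x⁰ + dᵢ + dⱼ`. -/
theorem qmodel_interpolates_sum_cols {n p : ℕ} (f : (Fin n → ℝ) → ℝ) (x0 : Fin n → ℝ)
    (D : Matrix (Fin n) (Fin p) ℝ) (hrank : Function.Injective D.mulVec) :
    ∀ i j : Fin p, qmodel f x0 D (x0 + Dᵀ i + Dᵀ j) = f (x0 + Dᵀ i + Dᵀ j) := by
  intro i j
  have hx : (x0 + Dᵀ i + Dᵀ j) - x0 = Dᵀ i + Dᵀ j := by abel
  -- Hessian entries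
  have hH : Dᵀ * gsh f x0 D * D = deltaGsg f x0 D * D := by
    rw [gsh, ← Matrix.mul_assoc, key_unit D hrank, Matrix.one_mul]
  have hQ : ∀ a b : Fin p, (deltaGsg f x0 D * D) a b
      = deltaf f (x0 + Dᵀ a) D b - deltaf f x0 D b := by
    intro a b
    have : (deltaGsg f x0 D * D) a b
        = dotProduct (gsg f (x0 + Dᵀ a) D) (Dᵀ b) - dotProduct (gsg f x0 D) (Dᵀ b) := by
      simp only [mul_apply, deltaGsg, Matrix.of_apply, dotProduct, transpose_apply,
        sub_mul, Finset.sum_sub_distrib]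
    rw [this, dot_gsg f _ D hrank, dot_gsg f _ D hrank]
  -- linear term pieces
  have hg1 : ∀ b : Fin p, dotProduct (gsg f x0 D) (Dᵀ b) = deltaf f x0 D b :=
    fun b => dot_gsg f x0 D hrank b
  have h2col : ∀ b : Fin p, ((2:ℝ) • D)ᵀ b = Dᵀ b + Dᵀ b := by
    intro b; funext k
    simp [transpose_apply, two_mul]
  have hg2 : ∀ b : Fin p, dotProduct (gsg f x0 ((2:ℝ) • D)) (Dᵀ b)
      = (1/2) * (f (x0 + Dᵀ b + Dᵀ b) - f x0) := by
    intro b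
    have h := dot_gsg f x0 ((2:ℝ) • D) (two_smul_inj D hrank) b
    rw [h2col b] at h
    rw [dotProduct_add] at h
    have harg : x0 + (Dᵀ b + Dᵀ b) = x0 + Dᵀ b + Dᵀ b := by abel
    rw [deltaf, h2col b, harg] at h
    linarith [h]
  -- expand the model
  rw [qmodel, hx]
  rw [sub_dotProduct, smul_dotProduct, dotProduct_add, dotProduct_add,
    mulVec_add, dotProduct_add, add_dotProduct, add_dotProduct]
  rw [quad_form, quad_form, quad_form, quad_form, hH, hQ, hQ, hQ, hQ]
  rw [hg1 i, hg1 j, hg2 i, hg2 j]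
  simp only [deltaf, smul_eq_mul]
  rw [show x0 + Dᵀ j + Dᵀ i = x0 + Dᵀ i + Dᵀ j by abel]
  ring
end

section
/- Let $D \in \mathbb{R}^{n \times p}$ have full column rank with QR-factorization $D = QR$, $Q \in \mathbb{R}^{n \times p}$ orthonormal columns, $R \in \mathbb{R}^{p \times p}$. Let $f: \mathbb{R}^n \to \mathbb{R}$, $x^0 \in \mathbb{R}^n$, and $\widehat{f}(\widehat{s}) = f(x^0 + Q\widehat{s})$. Then $\nabla_S f(x^0; D)^\top Q = \nabla_S \widehat{f}(\mathbf{0}; R)^\top$ and $Q^\top \nabla_S^2 f(x^0; D) Q = \nabla_S^2 \widehat{f}(\mathbf{0}; R)$. -/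
open Matrix

lemma QmulVecRt {n p : ℕ} (D Q : Matrix (Fin n) (Fin p) ℝ) (R : Matrix (Fin p) (Fin p) ℝ)
    (hQR : D = Q * R) (i : Fin p) : Q.mulVec (Rᵀ i) = Dᵀ i := by
  funext k
  simp [hQR, mulVec, dotProduct, mul_apply, transpose_apply]

lemma pinv_eq {n p : ℕ} (D Q : Matrix (Fin n) (Fin p) ℝ) (R : Matrix (Fin p) (Fin p) ℝ)
    (hrank : Function.Injective D.mulVec)
    (hQR : D = Q * R) (hQ : Qᵀ * Q = 1) :
    D * (Dᵀ * D)⁻¹ = Q * (Rᵀ)⁻¹ ∧ R * (Rᵀ * R)⁻¹ = (Rᵀ)⁻¹ := by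
  have hRinj : Function.Injective R.mulVec := by
    intro v w h
    apply hrank
    simp [hQR, ← mulVec_mulVec, h]
  have hRu : IsUnit R := Matrix.mulVec_injective_iff_isUnit.mp hRinj
  have hRdet : IsUnit R.det := (Matrix.isUnit_iff_isUnit_det R).mp hRu
  have hDtD : Dᵀ * D = Rᵀ * R := by
    rw [hQR, transpose_mul, Matrix.mul_assoc, ← Matrix.mul_assoc Qᵀ, hQ, Matrix.one_mul]
  have h3 : R * (Rᵀ * R)⁻¹ = (Rᵀ)⁻¹ := by
    rw [Matrix.mul_inv_rev, ← Matrix.mul_assoc, Matrix.mul_nonsing_inv _ hRdet, Matrix.one_mul]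
  refine ⟨?_, h3⟩
  rw [hDtD, hQR, Matrix.mul_assoc, h3]

lemma gsg_rel {n p : ℕ} (f : (Fin n → ℝ) → ℝ)
    (D Q : Matrix (Fin n) (Fin p) ℝ) (R : Matrix (Fin p) (Fin p) ℝ)
    (hrank : Function.Injective D.mulVec)
    (hQR : D = Q * R) (hQ : Qᵀ * Q = 1) (y : Fin n → ℝ) :
    Qᵀ.mulVec (gsg f y D) = gsg (fun s => f (y + Q.mulVec s)) 0 R := by
  obtain ⟨h2, h3⟩ := pinv_eq D Q R hrank hQR hQ
  have hdelta : deltaf (fun s => f (y + Q.mulVec s)) 0 R = deltaf f y D := by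
    funext j
    simp [deltaf, QmulVecRt D Q R hQR]
  rw [gsg, gsg, h2, h3, hdelta, mulVec_mulVec, ← Matrix.mul_assoc, hQ, Matrix.one_mul]

/-- Relation between full-space and subspace generalized simplex gradients and
Hessians: `∇_S f(x⁰;D)ᵀQ = ∇_S f̂(0;R)ᵀ` and `Qᵀ∇²_S f(x⁰;D)Q = ∇²_S f̂(0;R)`,
where `D = QR` and `f̂(ŝ) = f(x⁰ + Qŝ)`. -/
theorem gsg_gsh_subspace_relation {n p : ℕ} (f : (Fin n → ℝ) → ℝ) (x0 : Fin n → ℝ)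
    (D Q : Matrix (Fin n) (Fin p) ℝ) (R : Matrix (Fin p) (Fin p) ℝ)
    (hrank : Function.Injective D.mulVec)
    (hQR : D = Q * R) (hQ : Qᵀ * Q = 1) :
    Qᵀ.mulVec (gsg f x0 D) = gsg (fun s => f (x0 + Q.mulVec s)) 0 R ∧
      Qᵀ * gsh f x0 D * Q = gsh (fun s => f (x0 + Q.mulVec s)) 0 R := by
  obtain ⟨h2, h3⟩ := pinv_eq D Q R hrank hQR hQ
  refine ⟨gsg_rel f D Q R hrank hQR hQ x0, ?_⟩
  have hDelta : deltaGsg f x0 D * Q =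
      deltaGsg (fun s => f (x0 + Q.mulVec s)) 0 R := by
    ext i j
    have key : ∀ y : Fin n → ℝ, (deltaGsg f x0 D * Q) i j =
        (Qᵀ.mulVec (gsg f (x0 + Dᵀ i) D)) j - (Qᵀ.mulVec (gsg f x0 D)) j := by
      intro _
      simp [deltaGsg, mul_apply, mulVec, dotProduct, sub_mul, mul_sub, Finset.sum_sub_distrib,
        transpose_apply, mul_comm]
    rw [key 0, gsg_rel f D Q R hrank hQR hQ, gsg_rel f D Q R hrank hQR hQ]
    have hshift : gsg (fun s => f (x0 + Dᵀ i + Q.mulVec s)) 0 R =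
        gsg (fun s => f (x0 + Q.mulVec s)) (0 + Rᵀ i) R := by
      have hd : deltaf (fun s => f (x0 + Dᵀ i + Q.mulVec s)) 0 R =
          deltaf (fun s => f (x0 + Q.mulVec s)) (0 + Rᵀ i) R := by
        funext j
        simp [deltaf, QmulVecRt D Q R hQR, Matrix.mulVec_add, add_assoc]
      rw [gsg, gsg, hd]
    rw [hshift]
    simp [deltaGsg]
  rw [gsh, gsh, h2, h3, ← Matrix.mul_assoc, ← Matrix.mul_assoc, hQ, Matrix.one_mul,
    Matrix.mul_assoc, hDelta]
end
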